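/- Let a > 0 and b > 0 be reals with a/b irrational. Then the language L = {s_a^i s_b^j : a·i − b·j ≥ 0} over the two-letter alphabet {s_a, s_b} is not context-free. -/

import Mathlib

/-!
Write `walkValue a b w = a·#s_a(w) − b·#s_b(w)` for the height at which the walk of `w` ends.
If the language were context-free with pumping constant `p`, pumping a long word
`w = uvxyz` would keep every `u vⁿ x yⁿ z` in it, so `walkValue (uxz) + n · walkValue (vy) ≥ 0`
for all `n`. Hence `walkValue (vy) ≥ 0`, and it is not `0` since `a/b` is irrational and
`vy ≠ []`; as `|vy| ≤ p`, it is at least the least positive walk value `δ` of a word of length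
`≤ p`. Since the ℕ-multiples of `a` are dense modulo `b`, some word `s_aⁱ s_bʲ` of length `≥ p`
has `0 < a·i − b·j < δ`, and pumping it down to `uxz` ends the walk below `0`.

The pumping lemma is proved with parse trees: a parse tree of minimal size for a long word has
a path on which a nonterminal repeats, and repeating or removing the part of the tree between
the two occurrences pumps the word.
-/

theorem ContextFreeGrammar.Derives.append {T : Type*} {g : ContextFreeGrammar T}
    {u u' v v' : List (Symbol T g.NT)} (hu : g.Derives u u') (hv : g.Derives v v') :
    g.Derives (u ++ v) (u' ++ v') :=
  (hu.append_right v).trans (hv.append_left u')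

theorem ContextFreeGrammar.Derives.flatMap {T ι : Type*} {g : ContextFreeGrammar T}
    {l : List ι} {f f' : ι → List (Symbol T g.NT)} (h : ∀ i ∈ l, g.Derives (f i) (f' i)) :
    g.Derives (l.flatMap f) (l.flatMap f') := by
  induction l with
  | nil => exact .refl _
  | cons i l ih =>
    simpa using (h i (by simp)).append (ih fun j hj => h j (by simp [hj]))

inductive ParseTree (T N : Type*) where
  | leaf (a : T)
  | node (A : N) (children : List (ParseTree T N))

namespace ParseTree

variable {T N : Type*}

@[elab_as_elim]
theorem induction_on {motive : ParseTree T N → Prop} (t : ParseTree T N)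
    (leaf : ∀ a, motive (leaf a))
    (node : ∀ A cs, (∀ c ∈ cs, motive c) → motive (node A cs)) : motive t :=
  match t with
  | .leaf a => leaf a
  | .node A cs => node A cs fun c _ => induction_on c leaf node

def root : ParseTree T N → Symbol T N
  | leaf a => .terminal a
  | node A _ => .nonterminal A

def yield : ParseTree T N → List T
  | leaf a => [a]
  | node _ cs => cs.flatMap yield

def size : ParseTree T N → ℕ
  | leaf _ => 1
  | node _ cs => (cs.map size).sum + 1

def height : ParseTree T N → ℕ
  | leaf _ => 0
  | node _ cs => (cs.map height).foldr max ⊥ + 1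

@[simp] lemma root_leaf (a : T) : (leaf a : ParseTree T N).root = .terminal a := rfl
@[simp] lemma root_node (A : N) (cs : List (ParseTree T N)) :
    (node A cs).root = .nonterminal A := rfl
@[simp] lemma yield_leaf (a : T) : (leaf a : ParseTree T N).yield = [a] := by simp [yield]
@[simp] lemma yield_node (A : N) (cs : List (ParseTree T N)) :
    (node A cs).yield = cs.flatMap yield := by simp [yield]
@[simp] lemma size_node (A : N) (cs : List (ParseTree T N)) :
    (node A cs).size = (cs.map size).sum + 1 := by simp [size]
@[simp] lemma height_leaf (a : T) : (leaf a : ParseTree T N).height = 0 := by simp [height]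
@[simp] lemma height_node (A : N) (cs : List (ParseTree T N)) :
    (node A cs).height = (cs.map height).foldr max ⊥ + 1 := by simp [height]

lemma height_lt_height_node {c : ParseTree T N} {cs : List (ParseTree T N)} (A : N)
    (hc : c ∈ cs) : c.height < (node A cs).height := by
  rw [height_node, Nat.lt_succ_iff]
  exact List.le_max_of_le (List.mem_map_of_mem hc) le_rfl

lemma exists_mem_lt_height {A : N} {cs : List (ParseTree T N)} {k : ℕ}
    (h : k + 1 < (node A cs).height) : ∃ c ∈ cs, k < c.height := by
  by_contra! hcs
  have := List.max_le_of_forall_le (cs.map height) k (by simpa using hcs)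
  rw [height_node] at h
  omega

inductive Context (T N : Type*) where
  | hole
  | node (A : N) (l : List (ParseTree T N)) (C : Context T N) (r : List (ParseTree T N))

namespace Context

def fill : Context T N → ParseTree T N → ParseTree T N
  | hole, s => s
  | node A l C r, s => .node A (l ++ C.fill s :: r)

def comp : Context T N → Context T N → Context T N
  | hole, D => D
  | node A l C r, D => node A l (C.comp D) r

@[simp] lemma fill_hole (s : ParseTree T N) : hole.fill s = s := rfl

lemma fill_comp (C D : Context T N) (s : ParseTree T N) :
    (C.comp D).fill s = C.fill (D.fill s) := by
  induction C with
  | hole => rfl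
  | node A l C r ih => simp [comp, fill, ih]

lemma root_fill_congr (C : Context T N) {s s' : ParseTree T N} (h : s.root = s'.root) :
    (C.fill s).root = (C.fill s').root := by
  cases C <;> simp [fill, h]

lemma exists_yield_fill (C : Context T N) :
    ∃ v y : List T, ∀ s, (C.fill s).yield = v ++ s.yield ++ y := by
  induction C with
  | hole => exact ⟨[], [], by simp⟩
  | node A l C r ih =>
    obtain ⟨v, y, h⟩ := ih
    exact ⟨l.flatMap yield ++ v, y ++ r.flatMap yield, by simp [fill, h]⟩

lemma length_yield_le_fill (C : Context T N) (s : ParseTree T N) :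
    s.yield.length ≤ (C.fill s).yield.length := by
  obtain ⟨v, y, h⟩ := C.exists_yield_fill
  simp only [h, List.length_append]
  omega

lemma size_fill_lt_size_fill (C : Context T N) {s s' : ParseTree T N}
    (h : s.size < s'.size) : (C.fill s).size < (C.fill s').size := by
  induction C with
  | hole => exact h
  | node A l C r ih => simpa [fill] using ih

lemma size_lt_size_fill {C : Context T N} (hC : C ≠ hole) (s : ParseTree T N) :
    s.size < (C.fill s).size := by
  induction C with
  | hole => exact absurd rfl hC
  | node A l C r ih =>
    have hle : s.size ≤ (C.fill s).size := by
      rcases eq_or_ne C hole with rfl | hC'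
      · rfl
      · exact (ih hC').le
    simp only [fill, size_node, List.map_append, List.map_cons, List.sum_append, List.sum_cons]
    omega

end Context

open Context

lemma exists_fill_height_eq {k : ℕ} (t : ParseTree T N) (h : k < t.height) :
    ∃ (C : Context T N) (s : ParseTree T N), t = C.fill s ∧ s.height = k + 1 := by
  induction t using induction_on with
  | leaf a => simp at h
  | node A cs ih =>
    rcases eq_or_lt_of_le (Nat.succ_le_of_lt h) with h' | h'
    · exact ⟨hole, _, rfl, h'.symm⟩
    obtain ⟨c, hc, hkc⟩ := exists_mem_lt_height h'
    obtain ⟨C, s, rfl, hs⟩ := ih c hc hkc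
    obtain ⟨l, r, rfl⟩ := List.append_of_mem hc
    exact ⟨Context.node A l C r, s, rfl, hs⟩

lemma exists_nested_root_eq (S : Finset N) (t : ParseTree T N)
    (hS : ∀ (C : Context T N) A cs, t = C.fill (node A cs) → A ∈ S)
    (h : t.height = S.card + 1) :
    ∃ (C D : Context T N) (s : ParseTree T N),
      D ≠ hole ∧ (D.fill s).root = s.root ∧ t = C.fill (D.fill s) := by
  classical
  induction t using induction_on generalizing S with
  | leaf a => simp at h
  | node A cs ih =>
    have hA : A ∈ S := hS hole A cs rfl
    have hcard := Finset.card_pos.mpr ⟨A, hA⟩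
    obtain ⟨c, hc, hkc⟩ := exists_mem_lt_height (A := A) (cs := cs) (k := S.card - 1) (by omega)
    have hck := height_lt_height_node A hc
    obtain ⟨l, r, rfl⟩ := List.append_of_mem hc
    -- Either `A` recurs inside the tallest child `c`, or `c` only uses the labels in `S.erase A`.
    by_cases hrep : ∃ (C : Context T N) (cs' : List (ParseTree T N)), c = C.fill (node A cs')
    · obtain ⟨C, cs', rfl⟩ := hrep
      exact ⟨hole, .node A l C r, node A cs', nofun, rfl, rfl⟩
    push Not at hrep
    have hS' : ∀ (C : Context T N) B cs', c = C.fill (node B cs') → B ∈ S.erase A :=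
      fun C B cs' hB => Finset.mem_erase.mpr
        ⟨fun hBA => hrep C cs' (hBA ▸ hB), hS (.node A l C r) B cs' (by simp [fill, hB])⟩
    obtain ⟨C, D, s, hD, hroot, rfl⟩ :=
      ih c hc (S.erase A) hS' (by rw [Finset.card_erase_of_mem hA]; omega)
    exact ⟨.node A l C r, D, s, hD, hroot, rfl⟩

lemma yield_iterate {F : ParseTree T N → ParseTree T N} {v y : List T}
    (hF : ∀ s, (F s).yield = v ++ s.yield ++ y) (n : ℕ) (s : ParseTree T N) :
    (F^[n] s).yield = (List.replicate n v).flatten ++ s.yield ++ (List.replicate n y).flatten := by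
  induction n with
  | zero => simp
  | succ n ih =>
    rw [Function.iterate_succ_apply', hF, ih, List.replicate_succ, List.replicate_succ']
    simp

inductive Valid (g : ContextFreeGrammar T) : ParseTree T g.NT → Prop
  | leaf (a : T) : Valid g (leaf a)
  | node (A : g.NT) (cs : List (ParseTree T g.NT)) :
      ⟨A, cs.map root⟩ ∈ g.rules → (∀ c ∈ cs, Valid g c) → Valid g (node A cs)

variable {g : ContextFreeGrammar T}

lemma Valid.of_fill {C : Context T g.NT} {s : ParseTree T g.NT} (h : (C.fill s).Valid g) :
    s.Valid g := by
  induction C with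
  | hole => exact h
  | node A l C r ih =>
    cases h with
    | node _ _ _ hcs => exact ih (hcs _ (by simp))

lemma Valid.fill {C : Context T g.NT} {s s' : ParseTree T g.NT} (h : (C.fill s).Valid g)
    (hs' : s'.Valid g) (hroot : s'.root = s.root) : (C.fill s').Valid g := by
  induction C with
  | hole => exact hs'
  | node A l C r ih =>
    cases h with
    | node _ _ hr hcs =>
      refine .node _ _ (by simpa [C.root_fill_congr hroot] using hr) ?_
      intro c hc
      rcases List.mem_append.mp hc with hc | hc
      · exact hcs c (List.mem_append_left _ hc)
      rcases List.mem_cons.mp hc with rfl | hc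
      · exact ih (hcs _ (by simp))
      · exact hcs c (by simp [hc])

lemma Valid.exists_rule_input_eq {t : ParseTree T g.NT} (ht : t.Valid g) {C : Context T g.NT} {A : g.NT}
    {cs : List (ParseTree T g.NT)} (h : t = C.fill (ParseTree.node A cs)) :
    ∃ r ∈ g.rules, r.input = A := by
  subst h
  cases ht.of_fill with
  | node _ _ hr _ => exact ⟨_, hr, rfl⟩

lemma Valid.length_yield_le {m : ℕ} (hm : ∀ r ∈ g.rules, r.output.length ≤ m) (hm0 : 0 < m)
    {t : ParseTree T g.NT} (ht : t.Valid g) : t.yield.length ≤ m ^ t.height := by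
  induction ht with
  | leaf a => simp
  | node A cs hr _ ih =>
    have hchild : ∀ c ∈ cs, c.yield.length ≤ m ^ (cs.map height).foldr max ⊥ := fun c hc =>
      (ih c hc).trans (Nat.pow_le_pow_right hm0 (by simpa using height_lt_height_node A hc))
    calc (ParseTree.node A cs).yield.length = (cs.map fun c => c.yield.length).sum := by
          simp [List.length_flatMap]
      _ ≤ (cs.map fun c => c.yield.length).length • m ^ (cs.map height).foldr max ⊥ :=
          List.sum_le_card_nsmul _ _ fun x hx => by
            obtain ⟨c, hc, rfl⟩ := List.mem_map.mp hx
            exact hchild c hc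
      _ ≤ m * m ^ (cs.map height).foldr max ⊥ := by
          rw [List.length_map, smul_eq_mul]
          gcongr
          simpa using hm _ hr
      _ = m ^ (ParseTree.node A cs).height := by rw [height_node, pow_succ']

theorem Valid.derives {t : ParseTree T g.NT} (ht : t.Valid g) :
    g.Derives [t.root] (t.yield.map .terminal) := by
  induction ht with
  | leaf a => simpa using ContextFreeGrammar.Derives.refl (g := g) [.terminal a]
  | node A cs hr _ ih =>
    have hstep : g.Produces [.nonterminal A] (cs.map root) :=
      ⟨_, hr, ContextFreeRule.Rewrites.input_output⟩
    have hcs : g.Derives (cs.flatMap fun c => [c.root])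
        (cs.flatMap fun c => c.yield.map .terminal) :=
      ContextFreeGrammar.Derives.flatMap ih
    rw [← List.map_eq_flatMap] at hcs
    simpa [List.map_flatMap] using hstep.single.trans hcs

theorem exists_valid_of_derives {s : List (Symbol T g.NT)} {w : List T}
    (h : g.Derives s (w.map .terminal)) :
    ∃ ts : List (ParseTree T g.NT), (∀ t ∈ ts, t.Valid g) ∧ ts.map root = s ∧
      ts.flatMap yield = w := by
  induction h using Relation.ReflTransGen.head_induction_on with
  | refl =>
    refine ⟨w.map leaf, by simp [Valid.leaf], by simp [Function.comp_def], ?_⟩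
    simp [List.flatMap_map]
  | head hstep _ ih =>
    obtain ⟨ts, hts, hroot, rfl⟩ := ih
    obtain ⟨r, hr, hrw⟩ := hstep
    obtain ⟨p, q, rfl, rfl⟩ := hrw.exists_parts
    obtain ⟨l', rs, rfl, hl', rfl⟩ := List.map_eq_append_iff.mp hroot
    obtain ⟨ls, cs, rfl, rfl, hcs⟩ := List.map_eq_append_iff.mp hl'
    have hnode : (node r.input cs).Valid g :=
      .node _ _ (by rwa [hcs]) fun c hc => hts c (by simp [hc])
    refine ⟨ls ++ node r.input cs :: rs, fun t ht => ?_, by simp, by simp⟩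
    simp only [List.mem_append, List.mem_cons] at ht
    rcases ht with ht | rfl | ht
    · exact hts t (by simp [ht])
    · exact hnode
    · exact hts t (by simp [ht])

theorem mem_language_iff_exists_valid {w : List T} :
    w ∈ g.language ↔
      ∃ t : ParseTree T g.NT, t.Valid g ∧ t.root = .nonterminal g.initial ∧ t.yield = w := by
  rw [ContextFreeGrammar.mem_language_iff]
  constructor
  · intro h
    obtain ⟨ts, hts, hroot, rfl⟩ := exists_valid_of_derives h
    obtain ⟨t, rfl, ht⟩ := List.map_eq_singleton_iff.mp hroot
    exact ⟨t, hts t (by simp), ht, by simp⟩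
  · rintro ⟨t, ht, hroot, rfl⟩
    simpa [hroot] using ht.derives

lemma Valid.iterate_fill {D : Context T g.NT} {s : ParseTree T g.NT} (h : (D.fill s).Valid g)
    (hroot : (D.fill s).root = s.root) (n : ℕ) :
    (D.fill^[n] s).Valid g ∧ (D.fill^[n] s).root = s.root := by
  induction n with
  | zero => exact ⟨h.of_fill, rfl⟩
  | succ n ih =>
    rw [Function.iterate_succ_apply']
    exact ⟨h.fill ih.1 ih.2, (D.root_fill_congr ih.2).trans hroot⟩

theorem Valid.exists_pumping {S : Finset g.NT} {m : ℕ} (hS : ∀ r ∈ g.rules, r.input ∈ S)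
    (hm : ∀ r ∈ g.rules, r.output.length ≤ m) (hm0 : 0 < m) {t : ParseTree T g.NT}
    (ht : t.Valid g)
    (hmin : ∀ t' : ParseTree T g.NT, t'.Valid g → t'.root = t.root → t'.yield = t.yield →
      t.size ≤ t'.size)
    (hlen : m ^ S.card < t.yield.length) :
    ∃ u v x y z : List T, t.yield = u ++ v ++ x ++ y ++ z ∧ v ++ y ≠ [] ∧
      (v ++ x ++ y).length ≤ m ^ (S.card + 1) ∧
      ∀ n, ∃ t' : ParseTree T g.NT, t'.Valid g ∧ t'.root = t.root ∧
        t'.yield = u ++ (List.replicate n v).flatten ++ x ++ (List.replicate n y).flatten ++ z := by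
  have hheight : S.card < t.height := by
    by_contra! h
    exact hlen.not_ge ((ht.length_yield_le hm hm0).trans (Nat.pow_le_pow_right hm0 h))
  obtain ⟨C₀, t₀, rfl, ht₀⟩ := t.exists_fill_height_eq hheight
  have ht₀v : t₀.Valid g := ht.of_fill
  obtain ⟨C₁, D, s, hD, hroot, rfl⟩ := t₀.exists_nested_root_eq S
    (fun C A cs h => by obtain ⟨r, hr, rfl⟩ := ht₀v.exists_rule_input_eq h; exact hS r hr) ht₀
  rw [← fill_comp] at ht hmin ⊢
  obtain ⟨u, z, hC⟩ := (C₀.comp C₁).exists_yield_fill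
  obtain ⟨v, y, hD'⟩ := D.exists_yield_fill
  refine ⟨u, v, s.yield, y, z, by simp [hC, hD'], fun hvy => ?_, ?_, fun n => ?_⟩
  · -- Cutting out `D` would give a smaller parse tree of the same word.
    obtain ⟨rfl, rfl⟩ := List.append_eq_nil_iff.mp hvy
    refine (hmin _ (ht.fill ht.of_fill.of_fill hroot.symm) ((C₀.comp C₁).root_fill_congr hroot.symm)
      (by simp [hC, hD'])).not_gt ?_
    exact (C₀.comp C₁).size_fill_lt_size_fill (size_lt_size_fill hD s)
  · calc (v ++ s.yield ++ y).length = (D.fill s).yield.length := by rw [hD']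
      _ ≤ (C₁.fill (D.fill s)).yield.length := C₁.length_yield_le_fill _
      _ ≤ m ^ (S.card + 1) := ht₀ ▸ ht₀v.length_yield_le hm hm0
  · obtain ⟨hv, hr⟩ := ht.of_fill.iterate_fill hroot n
    have hr' := hr.trans hroot.symm
    refine ⟨_, ht.fill hv hr', (C₀.comp C₁).root_fill_congr hr', ?_⟩
    simp [hC, yield_iterate hD']

end ParseTree

theorem Language.IsContextFree.exists_pumping {T : Type*} {L : Language T}
    (hL : L.IsContextFree) :
    ∃ p : ℕ, ∀ w ∈ L, p ≤ w.length → ∃ u v x y z : List T, w = u ++ v ++ x ++ y ++ z ∧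
      v ++ y ≠ [] ∧ (v ++ x ++ y).length ≤ p ∧
      ∀ n : ℕ, u ++ (List.replicate n v).flatten ++ x ++ (List.replicate n y).flatten ++ z ∈ L := by
  classical
  obtain ⟨g, rfl⟩ := hL
  set S := g.rules.image ContextFreeRule.input
  -- `m` bounds the branching; `2 ≤ m` makes `m ^ S.card < m ^ (S.card + 1)`.
  set m := g.rules.sup (fun r => r.output.length) + 2 with hm
  refine ⟨m ^ (S.card + 1), fun w hw hlen => ?_⟩
  obtain ⟨t, ⟨ht, hroot, rfl⟩, hmin⟩ := (measure ParseTree.size).wf.has_min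
    {t | t.Valid g ∧ t.root = .nonterminal g.initial ∧ t.yield = w}
    (ParseTree.mem_language_iff_exists_valid.mp hw)
  obtain ⟨u, v, x, y, z, hw, hvy, hvxy, hpump⟩ := ht.exists_pumping
    (fun r hr => Finset.mem_image_of_mem _ hr)
    (fun r hr => (Finset.le_sup (f := fun r => r.output.length) hr).trans (by omega))
    (by omega) (fun t' h₁ h₂ h₃ => not_lt.mp (hmin t' ⟨h₁, h₂.trans hroot, h₃⟩))
    ((Nat.pow_lt_pow_right (by omega) S.card.lt_succ_self).trans_le hlen)
  refine ⟨u, v, x, y, z, hw, hvy, hvxy, fun n => ?_⟩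
  obtain ⟨t', h₁, h₂, h₃⟩ := hpump n
  exact ParseTree.mem_language_iff_exists_valid.mpr ⟨t', h₁, h₂.trans hroot, h₃⟩

lemma Irrational.eq_zero_of_mul_natCast_eq {a b : ℝ} (h : Irrational (a / b)) {i j : ℕ}
    (hij : a * i = b * j) : i = 0 ∧ j = 0 := by
  have hb : b ≠ 0 := by rintro rfl; simp at h
  have hi : i = 0 := by
    by_contra hi
    refine h ⟨j / i, ?_⟩
    push_cast
    rw [div_eq_div_iff (by exact_mod_cast hi) hb]
    linarith
  subst hi
  simpa [hb] using hij.symm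

lemma exists_nat_mul_sub_nat_mul_mem_Ioo {a b ε : ℝ} (ha : 0 < a) (hb : 0 < b)
    (hab : Irrational (a / b)) (hε : 0 < ε) : ∃ i j : ℕ, a * i - b * j ∈ Set.Ioo 0 ε := by
  wlog hεb : ε ≤ b generalizing ε
  · obtain ⟨i, j, h⟩ := this (lt_min hε hb) (min_le_right _ _)
    exact ⟨i, j, h.1, h.2.trans_le (min_le_left _ _)⟩
  have : Fact (0 < b) := ⟨hb⟩
  have hdense : DenseRange (fun n : ℕ => n • (a : AddCircle b)) :=
    denseRange_zsmul_iff_nsmul.mp (AddCircle.denseRange_zsmul_coe_iff.mpr hab)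
  obtain ⟨i, x, hx, hix⟩ := hdense.exists_mem_open
    (QuotientAddGroup.isOpenMap_coe _ isOpen_Ioo) ((Set.nonempty_Ioo.mpr hε).image _)
  -- `i • a ≡ x (mod b)` with `x ∈ (0, ε)`; as `ε ≤ b`, the multiple of `b` involved is `≥ 0`.
  rw [← AddCircle.coe_nsmul, QuotientAddGroup.eq, AddSubgroup.mem_zmultiples_iff] at hix
  obtain ⟨k, hk⟩ := hix
  rw [zsmul_eq_mul, nsmul_eq_mul] at hk
  have hk0 : 0 ≤ k := by
    by_contra! hk0
    have : (k : ℝ) ≤ -1 := by exact_mod_cast Int.le_sub_one_of_lt hk0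
    nlinarith [hx.2, (Nat.cast_nonneg i : (0 : ℝ) ≤ i)]
  refine ⟨i, k.toNat, ?_⟩
  rw [show ((k.toNat : ℕ) : ℝ) = k by exact_mod_cast Int.toNat_of_nonneg hk0]
  convert hx using 1
  linarith

lemma exists_le_nat_mul_sub_nat_mul_mem_Ioo {a b ε : ℝ} (ha : 0 < a) (hb : 0 < b)
    (hab : Irrational (a / b)) (hε : 0 < ε) (N : ℕ) :
    ∃ i j : ℕ, N ≤ i ∧ a * i - b * j ∈ Set.Ioo 0 ε := by
  obtain ⟨i, j, hpos, hlt⟩ :=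
    exists_nat_mul_sub_nat_mul_mem_Ioo ha hb hab (div_pos hε (N.cast_add_one_pos (α := ℝ)))
  have hi : 1 ≤ i := Nat.one_le_iff_ne_zero.mpr <| by
    rintro rfl
    simp only [CharP.cast_eq_zero, mul_zero, zero_sub, Left.neg_pos_iff] at hpos
    exact hpos.not_ge (by positivity)
  refine ⟨(N + 1) * i, (N + 1) * j, by nlinarith, ?_, ?_⟩
  · push_cast; nlinarith
  · push_cast
    rw [lt_div_iff₀ (N.cast_add_one_pos)] at hlt
    linarith

lemma nonneg_of_forall_add_nat_mul_nonneg {K : Type*} [Field K] [LinearOrder K]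
    [IsStrictOrderedRing K] [Archimedean K] {c d : K} (h : ∀ n : ℕ, 0 ≤ c + n * d) : 0 ≤ d := by
  by_contra! hd
  obtain ⟨n, hn⟩ := exists_nat_gt (c / -d)
  rw [div_lt_iff₀ (neg_pos.mpr hd)] at hn
  linarith [h n]

lemma List.exists_pos_le_of_length_le {α : Type*} [Finite α] (f : List α → ℝ) (p : ℕ) :
    ∃ δ > 0, ∀ w : List α, w.length ≤ p → 0 < f w → δ ≤ f w := by
  set s := {w : List α | w.length ≤ p ∧ 0 < f w}
  rcases s.eq_empty_or_nonempty with hs | hs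
  · exact ⟨1, one_pos, fun w hw hpos => absurd ⟨hw, hpos⟩ (hs ▸ Set.notMem_empty w)⟩
  obtain ⟨w₀, hw₀, hmin⟩ :=
    s.exists_min_image f ((List.finite_length_le α p).subset fun _ hw => hw.1) hs
  exact ⟨_, hw₀.2, fun w hw hpos => hmin w ⟨hw, hpos⟩⟩

-- `true` stands for the up-step `s_a` and `false` for the down-step `s_b`.
def walkLanguage (a b : ℝ) : Language Bool :=
  {w | ∃ i j : ℕ, w = List.replicate i true ++ List.replicate j false ∧ 0 ≤ a * i - b * j}

def walkValue (a b : ℝ) (w : List Bool) : ℝ := a * w.count true - b * w.count false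

section walkValue

variable {a b : ℝ}

lemma walkValue_append (w w' : List Bool) :
    walkValue a b (w ++ w') = walkValue a b w + walkValue a b w' := by
  simp only [walkValue, List.count_append]
  push_cast
  ring

lemma walkValue_flatten_replicate (n : ℕ) (w : List Bool) :
    walkValue a b (List.replicate n w).flatten = n * walkValue a b w := by
  induction n with
  | zero => simp [walkValue]
  | succ n ih =>
    rw [List.replicate_succ, List.flatten_cons, walkValue_append, ih]
    push_cast
    ring

lemma walkValue_replicate_append (i j : ℕ) :
    walkValue a b (List.replicate i true ++ List.replicate j false) = a * i - b * j := by
  simp [walkValue, List.count_replicate]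

lemma walkValue_nonneg_of_mem {w : List Bool} (hw : w ∈ walkLanguage a b) :
    0 ≤ walkValue a b w := by
  obtain ⟨i, j, rfl, h⟩ := hw
  rwa [walkValue_replicate_append]

lemma Irrational.walkValue_ne_zero (h : Irrational (a / b)) {w : List Bool} (hw : w ≠ []) :
    walkValue a b w ≠ 0 := by
  intro h0
  obtain ⟨ht, hf⟩ := h.eq_zero_of_mul_natCast_eq (sub_eq_zero.mp h0)
  exact hw (List.length_eq_zero_iff.mp (by rw [← List.count_true_add_count_false, ht, hf]))

end walkValue

/-- For `a, b > 0` with `a/b` irrational, the language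
`{s_a^i s_b^j : a·i − b·j ≥ 0}` (with `s_a` encoded by `true` and `s_b` by
`false`) is not context-free. -/
theorem stmt5 (a b : ℝ) (ha : 0 < a) (hb : 0 < b) (hir : Irrational (a / b)) :
    ¬ Language.IsContextFree
      {w : List Bool | ∃ i j : ℕ,
        w = List.replicate i true ++ List.replicate j false ∧
        0 ≤ a * i - b * j} := by
  intro hcf
  obtain ⟨p, hp⟩ := Language.IsContextFree.exists_pumping (L := walkLanguage a b) hcf
  obtain ⟨δ, hδ, hδle⟩ := List.exists_pos_le_of_length_le (walkValue a b) p
  obtain ⟨i, j, hpi, hij⟩ := exists_le_nat_mul_sub_nat_mul_mem_Ioo ha hb hir hδ p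
  obtain ⟨u, v, x, y, z, hw, hvy, hlen, hpump⟩ :=
    hp _ ⟨i, j, rfl, hij.1.le⟩ (by simp only [List.length_append, List.length_replicate]; omega)
  have hpumped (n : ℕ) : 0 ≤ walkValue a b (u ++ x ++ z) + n * walkValue a b (v ++ y) := by
    have := walkValue_nonneg_of_mem (hpump n)
    simp only [walkValue_append, walkValue_flatten_replicate] at this ⊢
    linarith
  have hvyδ : δ ≤ walkValue a b (v ++ y) :=
    hδle _ (by simp only [List.length_append] at hlen ⊢; omega) <|
      (nonneg_of_forall_add_nat_mul_nonneg hpumped).lt_of_ne (hir.walkValue_ne_zero hvy).symm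
  have hsplit : walkValue a b (u ++ x ++ z) + walkValue a b (v ++ y) = a * i - b * j := by
    rw [← walkValue_replicate_append, hw]
    simp only [walkValue_append]
    ring
  have hcut : 0 ≤ walkValue a b (u ++ x ++ z) := by simpa using hpumped 0
  linarith [hij.2]
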